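/- Let d ≥ 2 and let P ⊂ ℝ^d be finite with every d-element subset of P affinely independent. Define G = {(p,b) : p ∈ P, |b| = 1, p + b ∈ P} and let V'' be the set of tuples (p, b_1, ..., b_d) with each (p, b_j) ∈ G and the b_j pairwise distinct. Then the map Φ(p, b_1, ..., b_d) = (p + b_1, ..., p + b_d) from V'' to P^d is at most two-to-one. -/

import Mathlib

/-!
The fibre of `Φ` over `y` is determined by the point `p`, because `b_j = y_j - p`, and that point
lies at distance one from each of the `d` affinely independent points `y_j ∈ P`. Points that are
equidistant from the `y_j` differ by vectors orthogonal to their `(d - 1)`-dimensional vector span,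
so they lie on a line; a line meets the unit sphere about any `y_j` in at most two points.
-/

open Module EuclideanGeometry

namespace EuclideanGeometry

variable {V P ι : Type*} [NormedAddCommGroup V] [InnerProductSpace ℝ V] [MetricSpace P]
  [NormedAddTorsor V P] [FiniteDimensional ℝ V] [Fintype ι] [Nonempty ι]

theorem collinear_setOf_forall_dist_eq {y : ι → P} (hy : AffineIndependent ℝ y)
    (hcard : Fintype.card ι = finrank ℝ V) (r : ι → ℝ) :
    Collinear ℝ {p | ∀ i, dist p (y i) = r i} := by
  have hK : finrank ℝ (vectorSpan ℝ (Set.range y))ᗮ = 1 := by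
    have := (vectorSpan ℝ (Set.range y)).finrank_add_finrank_orthogonal
    have := hy.finrank_vectorSpan_add_one
    omega
  have hortho : vectorSpan ℝ {p | ∀ i, dist p (y i) = r i} ⟂ vectorSpan ℝ (Set.range y) := by
    rw [vectorSpan_def, vectorSpan_def, Submodule.isOrtho_span]
    rintro _ ⟨p, hp, q, hq, rfl⟩ _ ⟨_, ⟨i, rfl⟩, _, ⟨j, rfl⟩, rfl⟩
    rw [real_inner_comm]
    exact inner_vsub_vsub_of_dist_eq_of_dist_eq ((hq j).trans (hp j).symm)
      ((hq i).trans (hp i).symm)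
  rw [collinear_iff_finrank_le_one, ← hK]
  exact Submodule.finrank_mono (Submodule.isOrtho_iff_le.mp hortho)

theorem eq_or_eq_or_eq_of_forall_dist_eq {y : ι → P} (hy : AffineIndependent ℝ y)
    (hcard : Fintype.card ι = finrank ℝ V) {r : ι → ℝ} {p₁ p₂ p₃ : P}
    (h₁ : ∀ i, dist p₁ (y i) = r i) (h₂ : ∀ i, dist p₂ (y i) = r i)
    (h₃ : ∀ i, dist p₃ (y i) = r i) : p₁ = p₂ ∨ p₁ = p₃ ∨ p₂ = p₃ := by
  by_contra! ⟨h₁₂, h₁₃, h₂₃⟩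
  obtain ⟨i⟩ := ‹Nonempty ι›
  have hsphere : Cospherical ({p₁, p₂, p₃} : Set P) :=
    ⟨y i, r i, by simp only [Set.mem_insert_iff, Set.mem_singleton_iff]; grind⟩
  refine affineIndependent_iff_not_collinear_set.mp (hsphere.affineIndependent_of_ne h₁₂ h₁₃ h₂₃)
    ((collinear_setOf_forall_dist_eq hy hcard r).subset ?_)
  simp only [Set.insert_subset_iff, Set.singleton_subset_iff, Set.mem_ofPred_eq]
  exact ⟨h₁, h₂, h₃⟩

end EuclideanGeometry

theorem Set.exists_subset_pair_of_forall_eq_or_eq {α : Type*} [Nonempty α] {s : Set α}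
    (h : ∀ a ∈ s, ∀ b ∈ s, ∀ c ∈ s, a = b ∨ a = c ∨ b = c) : ∃ a b, s ⊆ {a, b} := by
  by_cases hsub : ∃ a, s ⊆ {a}
  · obtain ⟨a, ha⟩ := hsub
    exact ⟨a, a, by simpa using ha⟩
  push Not at hsub
  obtain ⟨a, ha, -⟩ := Set.not_subset.mp (hsub (Classical.arbitrary α))
  obtain ⟨b, hb, hba⟩ := Set.not_subset.mp (hsub a)
  refine ⟨a, b, fun c hc => ?_⟩
  rw [Set.mem_singleton_iff] at hba
  have := h a ha b hb c hc
  grind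

theorem AffineIndependent.of_forall_finset_card_eq {k V P ι : Type*} [Ring k]
    [AddCommGroup V] [Module k V] [AddTorsor V P] [Fintype ι] {s : Set P}
    (hs : ∀ S : Finset P, ↑S ⊆ s → S.card = Fintype.card ι →
      AffineIndependent k (fun x : S => (x : P)))
    {y : ι → P} (hinj : Function.Injective y) (hys : ∀ i, y i ∈ s) : AffineIndependent k y := by
  classical
  set S := Finset.univ.image y
  have hmem : ∀ i, y i ∈ S := fun i => Finset.mem_image_of_mem y (Finset.mem_univ i)
  have hS := hs S (by simpa [S, Set.range_subset_iff] using hys)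
    (Finset.card_image_of_injective _ hinj)
  exact hS.comp_embedding ⟨fun i => ⟨y i, hmem i⟩, fun i j h => hinj (congrArg Subtype.val h)⟩

theorem phi_at_most_two_to_one (d : ℕ) (hd : 2 ≤ d)
    (P : Finset (EuclideanSpace ℝ (Fin d)))
    (hP : ∀ S : Finset (EuclideanSpace ℝ (Fin d)), S ⊆ P → S.card = d →
      AffineIndependent ℝ (fun s : S => (s : EuclideanSpace ℝ (Fin d))))
    (y : Fin d → EuclideanSpace ℝ (Fin d)) :
    ∃ v₁ v₂ : EuclideanSpace ℝ (Fin d) × (Fin d → EuclideanSpace ℝ (Fin d)),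
      {v : EuclideanSpace ℝ (Fin d) × (Fin d → EuclideanSpace ℝ (Fin d)) |
        ((∀ j, v.1 ∈ P ∧ ‖v.2 j‖ = 1 ∧ v.1 + v.2 j ∈ P) ∧ Function.Injective v.2) ∧
        (fun j => v.1 + v.2 j) = y} ⊆ {v₁, v₂} := by
  have : Nonempty (Fin d) := ⟨⟨0, by omega⟩⟩
  set F := {v : EuclideanSpace ℝ (Fin d) × (Fin d → EuclideanSpace ℝ (Fin d)) |
    ((∀ j, v.1 ∈ P ∧ ‖v.2 j‖ = 1 ∧ v.1 + v.2 j ∈ P) ∧ Function.Injective v.2) ∧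
    (fun j => v.1 + v.2 j) = y}
  have hsnd : ∀ v ∈ F, v.2 = fun j => y j - v.1 := fun v hv => by
    rw [← hv.2]; ext1 j; simp
  have hdist : ∀ v ∈ F, ∀ j, dist v.1 (y j) = 1 := fun v hv j => by
    rw [dist_eq_norm', ← congrFun (hsnd v hv) j]
    exact (hv.1.1 j).2.1
  have hext : ∀ v ∈ F, ∀ w ∈ F, v.1 = w.1 → v = w := fun v hv w hw h =>
    Prod.ext h (by rw [hsnd v hv, hsnd w hw, h])
  apply Set.exists_subset_pair_of_forall_eq_or_eq
  intro a ha b hb c hc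
  have hy : AffineIndependent ℝ y := by
    refine AffineIndependent.of_forall_finset_card_eq (s := ↑P)
      (fun S hS hcard => hP S (Finset.coe_subset.mp hS) (by simpa using hcard)) ?_
      (fun j => congrFun ha.2 j ▸ (ha.1.1 j).2.2)
    rw [← ha.2]
    exact (add_right_injective a.1).comp ha.1.2
  exact (eq_or_eq_or_eq_of_forall_dist_eq hy (by simp) (hdist a ha) (hdist b hb) (hdist c hc)).imp
    (hext a ha b hb) (Or.imp (hext a ha c hc) (hext b hb c hc))
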